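/- If X⁽¹⁾ and X⁽²⁾ are real-valued square-integrable random variables on a probability space, then ‖L(X⁽¹⁾) − L(X⁽²⁾)‖²_{M₀} ≤ √π · E[(X⁽¹⁾ − X⁽²⁾)²], where L(X) denotes the law of X and the norm is ‖ν‖²_{M₀} = ∫ℝ |ν̂(y)|² e^{-y²} dy with ν̂(y) = ∫ℝ e^{ixy} dν(x). -/

import Mathlib

open MeasureTheory Complex Real

/-! Since `x ↦ exp (i t x)` is `|t|`-Lipschitz, `|φ₁(t) − φ₂(t)| ≤ |t| 𝔼|X₁ − X₂|` for the
characteristic functions `φᵢ` of the laws, and by Cauchy–Schwarz the square of this is at most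
`t² 𝔼[(X₁ − X₂)²]`. Integrating against `e^{-t²}` leaves the Gaussian second moment
`∫ t² e^{-t²} dt = √π / 2`. -/

lemma norm_cexp_mul_I_sub_cexp_mul_I_le (a b : ℝ) :
    ‖cexp (a * I) - cexp (b * I)‖ ≤ |a - b| := by
  have hfactor : cexp (a * I) - cexp (b * I) = cexp (b * I) * (cexp (I * (a - b : ℝ)) - 1) := by
    rw [mul_sub, ← Complex.exp_add, mul_one]
    push_cast
    ring_nf
  rw [hfactor, norm_mul, norm_exp_ofReal_mul_I, one_mul, ← Real.norm_eq_abs]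
  exact Real.norm_exp_I_mul_ofReal_sub_one_le

lemma integral_cexp_I_mul_mul_eq_charFun (μ : Measure ℝ) (t : ℝ) :
    ∫ x : ℝ, cexp (I * x * t) ∂μ = charFun μ t := by
  rw [charFun_apply_real]
  congr with x
  ring_nf

section CharFun

variable {Ω : Type*} [MeasurableSpace Ω] {μ : Measure Ω}

lemma charFun_map_eq_integral {X : Ω → ℝ} (hX : AEMeasurable X μ) (t : ℝ) :
    charFun (μ.map X) t = ∫ ω, cexp ((t * X ω : ℝ) * I) ∂μ := by
  rw [charFun_apply_real, integral_map hX (by fun_prop)]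
  push_cast
  rfl

lemma integrable_cexp_ofReal_mul_I [IsFiniteMeasure μ] {f : Ω → ℝ} (hf : AEMeasurable f μ) :
    Integrable (fun ω ↦ cexp (f ω * I)) μ := by
  refine Integrable.of_bound (C := 1) (by fun_prop) (Filter.Eventually.of_forall fun ω ↦ ?_)
  rw [norm_exp_ofReal_mul_I]

lemma norm_charFun_map_sub_le [IsFiniteMeasure μ] {X Y : Ω → ℝ} (hX : AEMeasurable X μ)
    (hY : AEMeasurable Y μ) (hXY : Integrable (X - Y) μ) (t : ℝ) :
    ‖charFun (μ.map X) t - charFun (μ.map Y) t‖ ≤ |t| * ∫ ω, |X ω - Y ω| ∂μ := by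
  have hXt := integrable_cexp_ofReal_mul_I (hX.const_mul t)
  have hYt := integrable_cexp_ofReal_mul_I (hY.const_mul t)
  rw [charFun_map_eq_integral hX, charFun_map_eq_integral hY, ← integral_sub hXt hYt,
    ← integral_const_mul]
  refine (norm_integral_le_integral_norm _).trans
    (integral_mono (hXt.sub hYt).norm (hXY.abs.const_mul _) fun ω ↦ ?_)
  calc ‖cexp ((t * X ω : ℝ) * I) - cexp ((t * Y ω : ℝ) * I)‖
      ≤ |t * X ω - t * Y ω| := norm_cexp_mul_I_sub_cexp_mul_I_le _ _
    _ = |t| * |X ω - Y ω| := by rw [← mul_sub, abs_mul]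

lemma sq_integral_le_integral_sq [IsProbabilityMeasure μ] {f : Ω → ℝ} (hf : MemLp f 2 μ) :
    (∫ ω, f ω ∂μ) ^ 2 ≤ ∫ ω, f ω ^ 2 ∂μ := by
  have h := ProbabilityTheory.variance_nonneg f μ
  rw [ProbabilityTheory.variance_eq_sub hf] at h
  simp only [Pi.pow_apply] at h
  linarith

lemma norm_charFun_map_sub_sq_le [IsProbabilityMeasure μ] {X Y : Ω → ℝ} (hX : MemLp X 2 μ)
    (hY : MemLp Y 2 μ) (t : ℝ) :
    ‖charFun (μ.map X) t - charFun (μ.map Y) t‖ ^ 2 ≤ t ^ 2 * ∫ ω, (X ω - Y ω) ^ 2 ∂μ := by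
  have hXY : MemLp (X - Y) 2 μ := hX.sub hY
  have hCS : (∫ ω, |X ω - Y ω| ∂μ) ^ 2 ≤ ∫ ω, (X ω - Y ω) ^ 2 ∂μ := by
    simpa only [Pi.abs_apply, Pi.sub_apply, sq_abs] using sq_integral_le_integral_sq hXY.abs
  calc ‖charFun (μ.map X) t - charFun (μ.map Y) t‖ ^ 2
      ≤ (|t| * ∫ ω, |X ω - Y ω| ∂μ) ^ 2 := by
        gcongr
        exact norm_charFun_map_sub_le hX.aemeasurable hY.aemeasurable
          (hXY.integrable one_le_two) t
    _ ≤ t ^ 2 * ∫ ω, (X ω - Y ω) ^ 2 ∂μ := by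
        rw [mul_pow, sq_abs]
        gcongr

end CharFun

lemma integrable_sq_mul_exp_neg_sq : Integrable fun y : ℝ ↦ y ^ 2 * rexp (-y ^ 2) := by
  simpa [Real.rpow_natCast] using
    integrable_rpow_mul_exp_neg_mul_sq (b := 1) one_pos (s := 2) (by norm_num)

lemma integral_sq_mul_exp_neg_sq : ∫ y : ℝ, y ^ 2 * rexp (-y ^ 2) = √π / 2 := by
  have hhalf : ∫ y in Set.Ioi (0 : ℝ), y ^ 2 * rexp (-y ^ 2) = √π / 4 := by
    have hΓ := integral_rpow_mul_exp_neg_rpow (p := 2) (q := 2) two_pos (by norm_num)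
    rw [show ((2 : ℝ) + 1) / 2 = 1 / 2 + 1 by norm_num, Real.Gamma_add_one (by norm_num),
      Real.Gamma_one_half_eq] at hΓ
    simp only [Real.rpow_two] at hΓ
    linarith
  calc ∫ y : ℝ, y ^ 2 * rexp (-y ^ 2)
      = ∫ y : ℝ, |y| ^ 2 * rexp (-|y| ^ 2) := by simp only [sq_abs]
    _ = 2 * ∫ y in Set.Ioi (0 : ℝ), y ^ 2 * rexp (-y ^ 2) :=
        integral_comp_abs (f := fun y : ℝ ↦ y ^ 2 * rexp (-y ^ 2))
    _ = √π / 2 := by rw [hhalf]; ring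

/-- If X⁽¹⁾, X⁽²⁾ are square-integrable real random variables, then
`‖L(X¹) − L(X²)‖²_{M₀} ≤ √π · E[(X¹ − X²)²]`, where the `M₀`-norm of a (signed)
difference of laws is `∫ |L(X¹)^(y) − L(X²)^(y)|² e^{-y²} dy` in terms of Fourier
transforms (characteristic functions). -/
theorem law_dist_M0_le (Ω : Type*) [MeasureSpace Ω] (ℙ : Measure Ω) [IsProbabilityMeasure ℙ]
    (X₁ X₂ : Ω → ℝ) (hX₁ : MemLp X₁ 2 ℙ) (hX₂ : MemLp X₂ 2 ℙ) :
    (∫ y : ℝ, ‖(∫ x : ℝ, Complex.exp (Complex.I * x * y) ∂(ℙ.map X₁)) -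
        (∫ x : ℝ, Complex.exp (Complex.I * x * y) ∂(ℙ.map X₂))‖ ^ 2 * Real.exp (-y ^ 2))
      ≤ Real.sqrt π * ∫ ω, (X₁ ω - X₂ ω) ^ 2 ∂ℙ := by
  set E := ∫ ω, (X₁ ω - X₂ ω) ^ 2 ∂ℙ
  have hE : 0 ≤ E := integral_nonneg fun ω ↦ sq_nonneg _
  simp only [integral_cexp_I_mul_mul_eq_charFun]
  calc ∫ y, ‖charFun (ℙ.map X₁) y - charFun (ℙ.map X₂) y‖ ^ 2 * rexp (-y ^ 2)
      ≤ ∫ y, y ^ 2 * rexp (-y ^ 2) * E := by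
        refine integral_mono_of_nonneg (Filter.Eventually.of_forall fun y ↦ by positivity)
          (integrable_sq_mul_exp_neg_sq.mul_const E) (Filter.Eventually.of_forall fun y ↦ ?_)
        calc _ ≤ y ^ 2 * E * rexp (-y ^ 2) :=
              mul_le_mul_of_nonneg_right (norm_charFun_map_sub_sq_le hX₁ hX₂ y) (exp_nonneg _)
          _ = y ^ 2 * rexp (-y ^ 2) * E := by ring
    _ = √π / 2 * E := by rw [integral_mul_const, integral_sq_mul_exp_neg_sq]
    _ ≤ √π * E := mul_le_mul_of_nonneg_right (half_le_self (Real.sqrt_nonneg π)) hE
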